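/- arXiv:math/0503686 — 7 statements merged into one kernel-verified Lean document; each statement's English description precedes it below -/
import Mathlib

section
/- Let (R, i, χ) be an A-ring with a right grouplike character and M a right R-module. Then the map φ : Hom_R(A, M) → M^R defined by φ(f) = f(1_A) is an isomorphism of right B-modules, with inverse given by φ⁻¹(m)(a) = m·a. -/
open MulOpposite

/-- Let `(R, i, χ)` be an `A`-ring with a right grouplike character and
`M` a right `R`-module (a left `Rᵐᵒᵖ`-module). `A` is a right `R`-module via
`a ↼ r = χ (i a * r)`. The map `φ : Hom_R(A, M) → M^R`, `φ f = f 1`, is an isomorphism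
of right `B`-modules, with inverse `φ⁻¹ m = (a ↦ m ↼ i a)`.
Here `Hom_R(A, M)` is the set of additive right `R`-linear maps `A → M`, with right
`B`-action `(f · b) a = f (b * a)`, `M^R = {m | m ↼ r = m ↼ i (χ r)}` with right
`B`-action `m · b = m ↼ i b`. -/
theorem hom_A_M_iso_invariants
    {A R M : Type*} [Ring A] [Ring R] [AddCommGroup M] [Module Rᵐᵒᵖ M]
    (i : A →+* R) (χ : R →+ A)
    (hχA : ∀ (r : R) (a : A), χ (r * i a) = χ r * a)
    (hχmul : ∀ r s : R, χ (i (χ r) * s) = χ (r * s))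
    (hχone : χ (1 : R) = 1)
    (HomRA : Set (A → M))
    (hHom : ∀ f : A → M, f ∈ HomRA ↔
      (∀ x y : A, f (x + y) = f x + f y) ∧
      ∀ (a : A) (r : R), f (χ (i a * r)) = op r • f a)
    (MR : Set M)
    (hMR : ∀ m : M, m ∈ MR ↔ ∀ r : R, op r • m = op (i (χ r)) • m)
    (B : Set A) (hB : ∀ b : A, b ∈ B ↔ ∀ r : R, χ (i b * r) = b * χ r) :
    -- φ is well defined
    (∀ f ∈ HomRA, f 1 ∈ MR) ∧
    -- φ is injective
    (∀ f ∈ HomRA, ∀ g ∈ HomRA, f 1 = g 1 → f = g) ∧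
    -- φ⁻¹ is well defined and is a right inverse of φ: φ⁻¹ m = (a ↦ m · a)
    (∀ m ∈ MR, (fun a : A => op (i a) • m) ∈ HomRA ∧ op (i (1 : A)) • m = m) ∧
    -- φ is right B-linear: φ (f · b) = (φ f) · b
    (∀ f ∈ HomRA, ∀ b ∈ B,
      (fun a : A => f (b * a)) ∈ HomRA ∧ f (b * 1) = op (i b) • f 1) := by
  have hone : ∀ r : R, χ (i (1 : A) * r) = χ r := by
    intro r; rw [map_one, one_mul]
  have hia : ∀ a : A, χ (i a) = a := by
    intro a
    have := hχA 1 a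
    rwa [one_mul, hχone, one_mul] at this
  have key : ∀ f ∈ HomRA, ∀ a : A, f a = op (i a) • f 1 := by
    intro f hf a
    obtain ⟨-, hf2⟩ := (hHom f).mp hf
    have := hf2 1 (i a)
    rwa [hone, hia] at this
  refine ⟨?_, ?_, ?_, ?_⟩
  · intro f hf
    rw [hMR]
    intro r
    obtain ⟨-, hf2⟩ := (hHom f).mp hf
    have h1 := hf2 1 r
    have h2 := hf2 1 (i (χ r))
    rw [hone] at h1
    rw [hone, hia] at h2
    rw [← h1, ← h2]
  · intro f hf g hg h
    funext a
    rw [key f hf a, key g hg a, h]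
  · intro m hm
    refine ⟨?_, by rw [map_one, op_one, one_smul]⟩
    rw [hHom]
    constructor
    · intro x y; rw [map_add, op_add, add_smul]
    · intro a r
      rw [smul_smul, ← op_mul]
      exact ((hMR m).mp hm (i a * r)).symm
  · intro f hf b hb
    obtain ⟨hf1, hf2⟩ := (hHom f).mp hf
    constructor
    · rw [hHom]
      refine ⟨fun x y => by rw [mul_add, hf1], fun a r => ?_⟩
      calc f (b * χ (i a * r)) = f (χ (i b * (i a * r))) := by
            rw [(hB b).mp hb (i a * r)]
          _ = f (χ (i (b * a) * r)) := by rw [map_mul i, mul_assoc]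
          _ = op r • f (b * a) := hf2 (b * a) r
    · rw [mul_one, key f hf b]
end

section
/- Let (R, i, χ) be an A-ring with a right grouplike character. Then the map φ : End_R(A) → B, φ(f) = f(1_A), is an isomorphism of rings (and of B-bimodules), where End_R(A) is the endomorphism ring of A as a right R-module. -/
/-- Let `(R, i, χ)` be an `A`-ring with a right grouplike character.
The map `φ : End_R(A) → B`, `φ f = f 1`, is an isomorphism of rings, where
`End_R(A)` is the set of additive right `R`-linear endomorphisms of `A` (with the
right `R`-action `a ↼ r = χ (i a * r)` on `A`), composition as multiplication and
identity as unit, and `B = A^R` is the subring of invariants of `A`. -/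
theorem end_A_iso_B
    {A R : Type*} [Ring A] [Ring R] (i : A →+* R) (χ : R →+ A)
    (hχA : ∀ (r : R) (a : A), χ (r * i a) = χ r * a)
    (hχmul : ∀ r s : R, χ (i (χ r) * s) = χ (r * s))
    (hχone : χ (1 : R) = 1)
    (EndRA : Set (A → A))
    (hEnd : ∀ f : A → A, f ∈ EndRA ↔
      (∀ x y : A, f (x + y) = f x + f y) ∧
      ∀ (a : A) (r : R), f (χ (i a * r)) = χ (i (f a) * r))
    (B : Set A) (hB : ∀ b : A, b ∈ B ↔ ∀ r : R, χ (i b * r) = b * χ r) :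
    -- φ is well defined
    (∀ f ∈ EndRA, f 1 ∈ B) ∧
    -- φ is injective
    (∀ f ∈ EndRA, ∀ g ∈ EndRA, f 1 = g 1 → f = g) ∧
    -- φ is surjective onto B
    (∀ b ∈ B, (fun a : A => b * a) ∈ EndRA ∧ b * (1 : A) = b) ∧
    -- φ is additive
    (∀ f ∈ EndRA, ∀ g ∈ EndRA,
      (fun a : A => f a + g a) ∈ EndRA ∧ f 1 + g 1 = f 1 + g 1) ∧
    -- φ is multiplicative (multiplication of endomorphisms is composition)
    (∀ f ∈ EndRA, ∀ g ∈ EndRA, (f ∘ g) ∈ EndRA ∧ (f ∘ g) 1 = f 1 * g 1) ∧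
    -- φ is unital
    ((id : A → A) ∈ EndRA ∧ (id : A → A) 1 = 1) := by

  have hχi : ∀ a : A, χ (i a) = a := by
    intro a
    have := hχA 1 a
    rw [one_mul, hχone, one_mul] at this
    exact this
  have key : ∀ f ∈ EndRA, ∀ a : A, f a = f 1 * a := by
    intro f hf a
    have h := ((hEnd f).mp hf).2 1 (i a)
    rw [map_one, one_mul, hχi] at h
    -- h : f a = χ (i (f 1) * i a)
    rw [h, hχA, hχi]
  refine ⟨?_, ?_, ?_, ?_, ?_, ?_⟩
  · intro f hf
    rw [hB]
    intro r
    have h := ((hEnd f).mp hf).2 1 r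
    rw [map_one, one_mul] at h
    rw [← h, key f hf]
  · intro f hf g hg h
    funext a
    rw [key f hf, key g hg, h]
  · intro b hb
    refine ⟨?_, mul_one b⟩
    rw [hEnd]
    constructor
    · intro x y; exact mul_add b x y
    · intro a r
      rw [RingHom.map_mul i, mul_assoc]
      exact ((hB b).mp hb (i a * r)).symm
  · intro f hf g hg
    refine ⟨?_, rfl⟩
    rw [hEnd]
    have hf' := (hEnd f).mp hf
    have hg' := (hEnd g).mp hg
    exact ⟨fun x y => by rw [hf'.1, hg'.1]; abel,
      fun a r => by rw [hf'.2, hg'.2, map_add, add_mul, map_add]⟩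
  · intro f hf g hg
    have hf' := (hEnd f).mp hf
    have hg' := (hEnd g).mp hg
    refine ⟨?_, ?_⟩
    · rw [hEnd]
      exact ⟨fun x y => by simp [Function.comp, hg'.1, hf'.1],
        fun a r => by simp [Function.comp, hg'.2 a r, hf'.2 (g a) r]⟩
    · simp only [Function.comp_apply]
      rw [key f hf (g 1), key g hg 1, mul_one]
  · exact ⟨(hEnd id).mpr ⟨fun _ _ => rfl, fun _ _ => rfl⟩, rfl⟩
end

section
/- Let (R, i, χ) be an A-ring with a right grouplike character. Then A is projective as a right R-module if and only if there exists q ∈ Q = R^R such that χ(q) = 1_A. -/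
/-!
`χ`, viewed as a map of right `R`-modules `R → A`, is surjective with the section `a ↦ i a`
of abelian groups. So `A` is projective iff `χ` has an `R`-linear section `σ`. Such a section
is determined by `q = σ 1`, since `σ (χ r) = σ (1 ↼ r) = q r`; applied to `r` and to `i (χ r)`
(which have the same image under `χ`) this gives `q ∈ R^R`, and `χ ∘ σ = id` gives `χ q = 1`.
Conversely, for `q ∈ R^R` with `χ q = 1`, the map `a ↦ q i(a)` is such a section.
-/

open MulOpposite

section GrouplikeCharacter

variable {A R : Type*} [Ring A] [Ring R] (i : A →+* R) (χ : R →+ A)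

/-- The set `Q = R^R`. -/
def rightInvariants : Set R := {q | ∀ r : R, q * r = q * i (χ r)}

variable {i χ}

theorem map_ringHom_apply_eq_self (hχA : ∀ (r : R) (a : A), χ (r * i a) = χ r * a)
    (hχone : χ (1 : R) = 1) (a : A) : χ (i a) = a := by
  simpa [hχone] using hχA 1 a

variable [Module Rᵐᵒᵖ A]

def characterLinearMap (hsmul : ∀ (r : R) (a : A), op r • a = χ (i a * r))
    (hχmul : ∀ r s : R, χ (i (χ r) * s) = χ (r * s)) : R →ₗ[Rᵐᵒᵖ] A where
  toFun := χ
  map_add' := χ.map_add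
  map_smul' m x := by
    rw [RingHom.id_apply, ← op_unop m, hsmul, hχmul]
    rfl

def rightInvariantSection (hsmul : ∀ (r : R) (a : A), op r • a = χ (i a * r))
    {q : R} (hq : q ∈ rightInvariants i χ) : A →ₗ[Rᵐᵒᵖ] R where
  toFun a := q * i a
  map_add' a b := by rw [map_add, mul_add]
  map_smul' m a := by
    rw [RingHom.id_apply, ← op_unop m, hsmul, ← hq, op_smul_eq_mul, mul_assoc]

theorem map_character_eq_apply_one_mul (hsmul : ∀ (r : R) (a : A), op r • a = χ (i a * r))
    (σ : A →ₗ[Rᵐᵒᵖ] R) (s : R) : σ (χ s) = σ 1 * s := by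
  rw [← op_smul_eq_mul, ← σ.map_smul, hsmul, map_one, one_mul]

theorem apply_one_mem_rightInvariants (hsmul : ∀ (r : R) (a : A), op r • a = χ (i a * r))
    (hχi : ∀ a : A, χ (i a) = a) (σ : A →ₗ[Rᵐᵒᵖ] R) :
    σ 1 ∈ rightInvariants i χ := fun r => by
  rw [← map_character_eq_apply_one_mul hsmul, ← map_character_eq_apply_one_mul hsmul, hχi]

theorem characterLinearMap_comp_rightInvariantSection
    (hsmul : ∀ (r : R) (a : A), op r • a = χ (i a * r))
    (hχA : ∀ (r : R) (a : A), χ (r * i a) = χ r * a)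
    (hχmul : ∀ r s : R, χ (i (χ r) * s) = χ (r * s))
    {q : R} (hq : q ∈ rightInvariants i χ) (hq1 : χ q = 1) :
    characterLinearMap hsmul hχmul ∘ₗ rightInvariantSection hsmul hq = LinearMap.id :=
  LinearMap.ext fun a => show χ (q * i a) = a by rw [hχA, hq1, one_mul]

end GrouplikeCharacter

instance MulOpposite.projective_self (R : Type*) [Ring R] : Module.Projective Rᵐᵒᵖ R :=
  Module.Projective.of_equiv (opLinearEquiv Rᵐᵒᵖ : R ≃ₗ[Rᵐᵒᵖ] Rᵐᵒᵖ).symm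

/-- Let `(R, i, χ)` be an `A`-ring with a right grouplike character,
and regard `A` as a right `R`-module (a left `Rᵐᵒᵖ`-module) via `a ↼ r = χ (i a * r)`.
Then `A` is projective as a right `R`-module if and only if there exists
`q ∈ Q = R^R` with `χ q = 1`. -/
theorem projective_iff_exists_q
    {A R : Type*} [Ring A] [Ring R] (i : A →+* R) (χ : R →+ A)
    (hχA : ∀ (r : R) (a : A), χ (r * i a) = χ r * a)
    (hχmul : ∀ r s : R, χ (i (χ r) * s) = χ (r * s))
    (hχone : χ (1 : R) = 1)
    [Module Rᵐᵒᵖ A]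
    (hsmul : ∀ (r : R) (a : A), op r • a = χ (i a * r)) :
    Module.Projective Rᵐᵒᵖ A ↔
      ∃ q : R, (∀ r : R, q * r = q * i (χ r)) ∧ χ q = 1 := by
  have hχi := map_ringHom_apply_eq_self hχA hχone
  constructor
  · intro
    obtain ⟨σ, hσ⟩ := Module.projective_lifting_property
      (characterLinearMap hsmul hχmul) LinearMap.id fun a => ⟨i a, hχi a⟩
    exact ⟨σ 1, apply_one_mem_rightInvariants hsmul hχi σ, congr($hσ 1)⟩
  · rintro ⟨q, hq, hq1⟩
    exact Module.Projective.of_split _ _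
      (characterLinearMap_comp_rightInvariantSection hsmul hχA hχmul hq hq1)
end

section
/- Let R be a ring, M a quasi-projective right R-module, and N a noetherian right R-module. Then Hom_R(M, N) is a noetherian right End_R(M)-module. -/
/-!
Let `X ≤ Hom(M, N)` be an `End(M)`-submodule. Since `N` is noetherian, the sum of the images
of the maps in `X` is already the sum of the images of finitely many `f₁, …, fₙ ∈ X`. Every
`f ∈ X` then factors as `f = ∑ fᵢ ∘ gᵢ` with `gᵢ ∈ End(M)`: quasi-projectivity of `M` lifts
`f` through `f₁` modulo `im f₂ + ⋯ + im fₙ`, and induction on `n` peels off one `fᵢ` at a time.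
Hence `f₁, …, fₙ` generate `X`.
-/

open MulOpposite LinearMap

theorem CompleteLattice.exists_finset_iSup_le_biSup {α : Type*} [CompleteLattice α]
    [WellFoundedGT α] {ι : Type*} (p : ι → α) : ∃ s : Finset ι, ⨆ i, p i ≤ ⨆ i ∈ s, p i := by
  have hcompact : ∀ k : α, IsCompactElement k :=
    (wellFoundedGT_characterisations α).out 0 3 |>.mp ‹_›
  exact IsCompactElement.exists_finset_of_le_iSup α (hcompact _) p le_rfl

def IsQuasiProjective (S M : Type*) [Ring S] [AddCommGroup M] [Module S M] : Prop :=
  ∀ (K : Submodule S M) (f : M →ₗ[S] M ⧸ K), ∃ g : M →ₗ[S] M, ∀ m : M, K.mkQ (g m) = f m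

namespace IsQuasiProjective

variable {S M N : Type*} [Ring S] [AddCommGroup M] [Module S M] [AddCommGroup N] [Module S N]
  (hM : IsQuasiProjective S M)
include hM

/-- `range f₁ ≅ M ⧸ ker f₁`, so a map into `range f₁` is a map into a quotient of `M`. -/
theorem exists_comp_eq {f f₁ : M →ₗ[S] N} (h : range f ≤ range f₁) :
    ∃ g : Module.End S M, f₁ ∘ₗ g = f := by
  let e := f₁.quotKerEquivRange
  obtain ⟨g, hg⟩ := hM (ker f₁) (e.symm.toLinearMap ∘ₗ f.codRestrict _ fun m => h ⟨m, rfl⟩)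
  refine ⟨g, LinearMap.ext fun m => ?_⟩
  have := congrArg (fun x => (e x : N)) (hg m)
  simpa [e] using this

theorem exists_range_sub_comp_le {f f₁ : M →ₗ[S] N} {T : Submodule S N}
    (h : range f ≤ range f₁ ⊔ T) : ∃ g : Module.End S M, range (f - f₁ ∘ₗ g) ≤ T := by
  have hmod : range (T.mkQ ∘ₗ f) ≤ range (T.mkQ ∘ₗ f₁) := by
    simpa only [range_comp, Submodule.map_sup, Submodule.mkQ_map_self, sup_bot_eq]
      using Submodule.map_mono (f := T.mkQ) h
  obtain ⟨g, hg⟩ := hM.exists_comp_eq hmod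
  refine ⟨g, ?_⟩
  rw [← T.ker_mkQ, range_le_ker_iff, comp_sub, ← comp_assoc, hg, sub_self]

theorem exists_eq_sum_comp {ι : Type*} (fs : ι → M →ₗ[S] N) (s : Finset ι) {f : M →ₗ[S] N}
    (h : range f ≤ ⨆ i ∈ s, range (fs i)) :
    ∃ g : ι → Module.End S M, f = ∑ i ∈ s, fs i ∘ₗ g i := by
  classical
  induction s using Finset.induction_on generalizing f with
  | empty =>
    refine ⟨0, ?_⟩
    simpa [range_eq_bot] using h
  | insert a s ha ih =>
    rw [Finset.iSup_insert] at h
    obtain ⟨g₀, hg₀⟩ := hM.exists_range_sub_comp_le h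
    obtain ⟨g, hg⟩ := ih hg₀
    refine ⟨Function.update g a g₀, ?_⟩
    rw [Finset.sum_insert ha, Function.update_self,
      Finset.sum_congr rfl fun i hi => by rw [Function.update_of_ne (ne_of_mem_of_not_mem hi ha)],
      ← hg, add_sub_cancel]

end IsQuasiProjective

/-- Let `R` be a ring, `M` a quasi-projective right `R`-module and `N`
a noetherian right `R`-module (right modules are left `Rᵐᵒᵖ`-modules). Then
`Hom_R(M, N)` is a noetherian right module over the endomorphism ring `End_R(M)`,
where the right action is `f · g = f ∘ g`. -/
theorem hom_noetherian_over_end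
    {R M N : Type*} [Ring R]
    [AddCommGroup M] [Module Rᵐᵒᵖ M] [AddCommGroup N] [Module Rᵐᵒᵖ N]
    -- M is quasi-projective
    (hqp : ∀ (K : Submodule Rᵐᵒᵖ M) (f : M →ₗ[Rᵐᵒᵖ] M ⧸ K),
      ∃ g : M →ₗ[Rᵐᵒᵖ] M, ∀ m : M, K.mkQ (g m) = f m)
    -- N is noetherian
    (hN : IsNoetherian Rᵐᵒᵖ N)
    -- the right End_R(M)-module structure on Hom_R(M, N), f · g = f ∘ g
    [Module (Module.End Rᵐᵒᵖ M)ᵐᵒᵖ (M →ₗ[Rᵐᵒᵖ] N)]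
    (hsmul : ∀ (g : Module.End Rᵐᵒᵖ M) (f : M →ₗ[Rᵐᵒᵖ] N),
      op g • f = f ∘ₗ g) :
    IsNoetherian (Module.End Rᵐᵒᵖ M)ᵐᵒᵖ (M →ₗ[Rᵐᵒᵖ] N) := by
  classical
  refine ⟨fun X => ?_⟩
  obtain ⟨s, hs⟩ :=
    CompleteLattice.exists_finset_iSup_le_biSup fun f : X => range (f : M →ₗ[Rᵐᵒᵖ] N)
  refine ⟨s.image Subtype.val, le_antisymm ?_ fun f hf => ?_⟩
  · rw [Submodule.span_le, Finset.coe_image]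
    rintro _ ⟨f, -, rfl⟩
    exact f.2
  · have hf_range : range f ≤ ⨆ i ∈ s, range (i : M →ₗ[Rᵐᵒᵖ] N) :=
      (le_iSup (fun i : X => range (i : M →ₗ[Rᵐᵒᵖ] N)) ⟨f, hf⟩).trans hs
    obtain ⟨g, rfl⟩ := IsQuasiProjective.exists_eq_sum_comp hqp (fun i : X => i.1) s hf_range
    refine Submodule.sum_mem _ fun i hi => ?_
    rw [← hsmul]
    exact Submodule.smul_mem _ _
      (Submodule.subset_span (Finset.mem_coe.2 (s.mem_image_of_mem _ hi)))
end

section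
/- Let (R, i, χ) be an I-Frobenius A-ring with a right grouplike character, with Frobenius system (e = e¹ ⊗ u¹ ⊗ e², ν̄) and Morita context I = (A, A, I, J, f, g), and write f⁻¹(1_A) = Σᵢ uᵢ ⊗ vᵢ ∈ I ⊗_A J. Then the map α : J → Q defined by α(v) = g(v ⊗_A χ(e¹)u¹) e² is a bijection from J onto Q = R^R which is right B-linear (α(vb) = α(v) i(b) for b ∈ B), with inverse β : Q → J given by β(q) = Σᵢ ν̄(q ⊗_A uᵢ) vᵢ. In particular, endowing J with the transported left R-action r·v = Σᵢ ν̄(r g(v ⊗ χ(e¹)u¹)e² ⊗_A uᵢ) vᵢ, α is an isomorphism of (R, B)-bimodules. -/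
open MulOpposite

/-- Let `(R, i, χ)` be an `I`-Frobenius `A`-ring with a right grouplike
character, with Frobenius system `(e = ∑ₖ e¹ₖ ⊗ u¹ₖ ⊗ e²ₖ, ν̄)` and strict Morita context
`(A, A, I, J, f, g)`, and let `∑ⱼ uⱼ ⊗ vⱼ` represent `f⁻¹(1)` (i.e. `∑ⱼ f(uⱼ ⊗ vⱼ) = 1`).
Then `α : J → Q`, `α v = g(v ⊗ χ(e¹)u¹) e²`, is a bijection onto `Q = R^R`, right
`B`-linear, with inverse `β q = ∑ⱼ ν̄(q ⊗ uⱼ) vⱼ`; endowing `J` with the transported left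
`R`-action `r · v = ∑ⱼ ν̄(r g(v ⊗ χ(e¹)u¹)e² ⊗ uⱼ) vⱼ`, `α` is an `(R, B)`-bimodule
isomorphism.

Tensor products over the noncommutative ring `A` are rendered via balanced maps: the
structure maps `f`, `g`, `ν̄` are given as balanced biadditive functions, and equalities
in tensor products (the Casimir condition and the Frobenius condition (3.1.3)) are
expressed as equalities after applying an arbitrary balanced biadditive map. -/
theorem frobenius_J_iso_Q
    {A R : Type u} [Ring A] [Ring R] (i : A →+* R) (χ : R →+ A)
    (hχA : ∀ (r : R) (a : A), χ (r * i a) = χ r * a)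
    (hχmul : ∀ r s : R, χ (i (χ r) * s) = χ (r * s))
    (hχone : χ (1 : R) = 1)
    -- the A-bimodules I and J
    {I J : Type u}
    [AddCommGroup I] [Module A I] [Module Aᵐᵒᵖ I] [SMulCommClass A Aᵐᵒᵖ I]
    [AddCommGroup J] [Module A J] [Module Aᵐᵒᵖ J] [SMulCommClass A Aᵐᵒᵖ J]
    -- the Morita context map f : I ⊗_A J → A, as a balanced biadditive map
    (fm : I → J → A)
    (hfadd₁ : ∀ (u u' : I) (v : J), fm (u + u') v = fm u v + fm u' v)
    (hfadd₂ : ∀ (u : I) (v v' : J), fm u (v + v') = fm u v + fm u v')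
    (hfbal : ∀ (a : A) (u : I) (v : J), fm (op a • u) v = fm u (a • v))
    (hfleft : ∀ (a : A) (u : I) (v : J), fm (a • u) v = a * fm u v)
    (hfright : ∀ (a : A) (u : I) (v : J), fm u (op a • v) = fm u v * a)
    -- the Morita context map g : J ⊗_A I → A
    (gm : J → I → A)
    (hgadd₁ : ∀ (v v' : J) (u : I), gm (v + v') u = gm v u + gm v' u)
    (hgadd₂ : ∀ (v : J) (u u' : I), gm v (u + u') = gm v u + gm v u')
    (hgbal : ∀ (a : A) (v : J) (u : I), gm (op a • v) u = gm v (a • u))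
    (hgleft : ∀ (a : A) (v : J) (u : I), gm (a • v) u = a * gm v u)
    (hgright : ∀ (a : A) (v : J) (u : I), gm v (op a • u) = gm v u * a)
    -- associativity of the Morita context: f(u ⊗ v)u' = u g(v ⊗ u'), g(v ⊗ u)v' = v f(u ⊗ v')
    (hassoc₁ : ∀ (u : I) (v : J) (u' : I), fm u v • u' = op (gm v u') • u)
    (hassoc₂ : ∀ (v : J) (u : I) (v' : J), gm v u • v' = op (fm u v') • v)
    -- strictness: f and g are surjective (hence bijective); ∑ⱼ uⱼ ⊗ vⱼ represents f⁻¹(1)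
    {n₁ : ℕ} (U : Fin n₁ → I) (V : Fin n₁ → J) (hUV : ∑ j, fm (U j) (V j) = 1)
    {n₂ : ℕ} (V' : Fin n₂ → J) (U' : Fin n₂ → I) (hVU : ∑ j, gm (V' j) (U' j) = 1)
    -- the Frobenius element e = ∑ₖ e¹ₖ ⊗ u¹ₖ ⊗ e²ₖ ∈ R ⊗_A I ⊗_A R
    {nf : ℕ} (e₁ : Fin nf → R) (uu : Fin nf → I) (e₂ : Fin nf → R)
    -- the Frobenius map ν̄ : R ⊗_A I → A, as a balanced biadditive A-bimodule map
    (ν : R → I → A)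
    (hνadd₁ : ∀ (r r' : R) (w : I), ν (r + r') w = ν r w + ν r' w)
    (hνadd₂ : ∀ (r : R) (w w' : I), ν r (w + w') = ν r w + ν r w')
    (hνbal : ∀ (a : A) (r : R) (w : I), ν (r * i a) w = ν r (a • w))
    (hνleft : ∀ (a : A) (r : R) (w : I), ν (i a * r) w = a * ν r w)
    (hνright : ∀ (a : A) (r : R) (w : I), ν r (op a • w) = ν r w * a)
    -- (3.1.1): the Casimir condition r e¹ ⊗ u¹ ⊗ e² = e¹ ⊗ u¹ ⊗ e² r in R ⊗_A I ⊗_A R,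
    -- tested against arbitrary balanced triadditive maps
    (hCas : ∀ (P : Type u) (_ : AddCommGroup P) (T : R → I → R → P),
      (∀ r r' w s, T (r + r') w s = T r w s + T r' w s) →
      (∀ r w w' s, T r (w + w') s = T r w s + T r w' s) →
      (∀ r w s s', T r w (s + s') = T r w s + T r w s') →
      (∀ (a : A) r w s, T (r * i a) w s = T r (a • w) s) →
      (∀ (a : A) r w s, T r (op a • w) s = T r w (i a * s)) →
      ∀ r : R, ∑ k, T (r * e₁ k) (uu k) (e₂ k) = ∑ k, T (e₁ k) (uu k) (e₂ k * r))
    -- (3.1.2): ν̄(e¹ ⊗ u¹) e² = 1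
    (hfrob₂ : ∑ k, i (ν (e₁ k) (uu k)) * e₂ k = 1)
    -- (3.1.3): e¹ ⊗ u¹ ν̄(e² ⊗ u) = 1 ⊗ u in R ⊗_A I, tested against balanced biadditive maps
    (hfrob₃ : ∀ (P : Type u) (_ : AddCommGroup P) (T : R → I → P),
      (∀ r r' w, T (r + r') w = T r w + T r' w) →
      (∀ r w w', T r (w + w') = T r w + T r w') →
      (∀ (a : A) r w, T (r * i a) w = T r (a • w)) →
      ∀ w : I, ∑ k, T (e₁ k) (op (ν (e₂ k) w) • uu k) = T 1 w) :
    -- conclusions about α v = g(v ⊗ χ(e¹)u¹) e² and β q = ∑ⱼ ν̄(q ⊗ uⱼ) vⱼ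
    -- (a) α takes values in Q = R^R
    (∀ (v : J) (r : R),
      (∑ k, i (gm v (χ (e₁ k) • uu k)) * e₂ k) * r
        = (∑ k, i (gm v (χ (e₁ k) • uu k)) * e₂ k) * i (χ r)) ∧
    -- (b) α is right B-linear: α(v b) = α(v) i(b) for b ∈ B
    (∀ (v : J) (b : A), (∀ r : R, χ (i b * r) = b * χ r) →
      (∑ k, i (gm (op b • v) (χ (e₁ k) • uu k)) * e₂ k)
        = (∑ k, i (gm v (χ (e₁ k) • uu k)) * e₂ k) * i b) ∧
    -- (c) β ∘ α = id on J
    (∀ v : J,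
      (∑ j, ν (∑ k, i (gm v (χ (e₁ k) • uu k)) * e₂ k) (U j) • V j) = v) ∧
    -- (d) α ∘ β = id on Q
    (∀ q : R, (∀ r : R, q * r = q * i (χ r)) →
      (∑ k, i (gm (∑ j, ν q (U j) • V j) (χ (e₁ k) • uu k)) * e₂ k) = q) ∧
    -- (e) α intertwines the transported left R-action
    --     r · v = ∑ⱼ ν̄(r g(v ⊗ χ(e¹)u¹)e² ⊗ uⱼ) vⱼ with left multiplication on Q
    (∀ (r : R) (v : J),
      (∑ k, i (gm (∑ j, ν (r * (∑ l, i (gm v (χ (e₁ l) • uu l)) * e₂ l)) (U j) • V j)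
          (χ (e₁ k) • uu k)) * e₂ k)
        = r * (∑ k, i (gm v (χ (e₁ k) • uu k)) * e₂ k)) := by
  classical
  -- additivity of the balanced maps in each argument, in summed form
  have gmsum : ∀ {m : ℕ} (F : Fin m → J) (w : I),
      gm (∑ j, F j) w = ∑ j, gm (F j) w := fun F w =>
    map_sum (AddMonoidHom.mk' (fun v' => gm v' w) fun a b => hgadd₁ a b w) F Finset.univ
  have νsum₁ : ∀ {m : ℕ} (F : Fin m → R) (w : I),
      ν (∑ k, F k) w = ∑ k, ν (F k) w := fun F w =>
    map_sum (AddMonoidHom.mk' (fun r => ν r w) fun a b => hνadd₁ a b w) F Finset.univ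
  have νsum₂ : ∀ {m : ℕ} (r : R) (G : Fin m → I),
      ν r (∑ j, G j) = ∑ j, ν r (G j) := fun r G =>
    map_sum (AddMonoidHom.mk' (fun w => ν r w) fun a b => hνadd₂ r a b) G Finset.univ
  -- Key consequence of the Casimir condition (3.1.1)
  have key : ∀ (v : J) (r : R),
      ∑ k, i (gm v (χ (r * e₁ k) • uu k)) * e₂ k
        = (∑ k, i (gm v (χ (e₁ k) • uu k)) * e₂ k) * r := by
    intro v r
    have h := hCas R inferInstance (fun r' w s => i (gm v (χ r' • w)) * s)
      (fun r r' w s => by simp only [map_add, add_smul, hgadd₂, add_mul])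
      (fun r w w' s => by simp only [smul_add, hgadd₂, map_add, add_mul])
      (fun r w s s' => by simp only [mul_add])
      (fun a r w s => by simp only [hχA, mul_smul])
      (fun a r w s => by
        simp only [smul_comm (χ r) (op a) w, hgright, map_mul, mul_assoc])
      r
    rw [Finset.sum_mul]
    simpa only [mul_assoc] using h
  -- (a) α(v) ∈ Q
  have ha : ∀ (v : J) (r : R),
      (∑ k, i (gm v (χ (e₁ k) • uu k)) * e₂ k) * r
        = (∑ k, i (gm v (χ (e₁ k) • uu k)) * e₂ k) * i (χ r) := by
    intro v r
    rw [← key v r, ← key v (i (χ r))]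
    exact Finset.sum_congr rfl fun k _ => by rw [hχmul]
  -- (d) α ∘ β = id on Q
  have hd : ∀ q : R, (∀ r : R, q * r = q * i (χ r)) →
      (∑ k, i (gm (∑ j, ν q (U j) • V j) (χ (e₁ k) • uu k)) * e₂ k) = q := by
    intro q hq
    have hgm : ∀ w : I, gm (∑ j, ν q (U j) • V j) w = ν q w := by
      intro w
      rw [gmsum]
      have h1 : ∀ j : Fin n₁, gm (ν q (U j) • V j) w = ν q (fm (U j) (V j) • w) := by
        intro j
        rw [hgleft, ← hνright, ← hassoc₁]
      rw [Finset.sum_congr rfl fun j _ => h1 j, ← νsum₂, ← Finset.sum_smul, hUV, one_smul]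
    have h2 : ∀ k, i (gm (∑ j, ν q (U j) • V j) (χ (e₁ k) • uu k)) * e₂ k
        = i (ν (q * e₁ k) (uu k)) * e₂ k := by
      intro k
      rw [hgm, ← hνbal, ← hq]
    rw [Finset.sum_congr rfl fun k _ => h2 k]
    have h := hCas R inferInstance (fun r w s => i (ν r w) * s)
      (fun r r' w s => by simp only [hνadd₁, map_add, add_mul])
      (fun r w w' s => by simp only [hνadd₂, map_add, add_mul])
      (fun r w s s' => by simp only [mul_add])
      (fun a r w s => by simp only [hνbal])
      (fun a r w s => by simp only [hνright, map_mul, mul_assoc])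
      q
    simp only [← mul_assoc] at h
    rw [h, ← Finset.sum_mul, hfrob₂, one_mul]
  refine ⟨ha, ?_, ?_, hd, ?_⟩
  · -- (b) right B-linearity
    intro v b hb
    rw [← key v (i b)]
    exact Finset.sum_congr rfl fun k _ => by rw [hgbal, ← mul_smul, ← hb]
  · -- (c) β ∘ α = id
    intro v
    have step1 : ∀ w : I, ν (∑ k, i (gm v (χ (e₁ k) • uu k)) * e₂ k) w
        = ∑ k, gm v (χ (e₁ k) • uu k) * ν (e₂ k) w := by
      intro w
      rw [νsum₁]
      exact Finset.sum_congr rfl fun k _ => by rw [hνleft]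
    have step2 : ∀ j, ∑ k, (gm v (χ (e₁ k) • uu k) * ν (e₂ k) (U j)) • V j
        = gm v (U j) • V j := by
      intro j
      have h := hfrob₃ J inferInstance (fun r w => gm v (χ r • w) • V j)
        (fun r r' w => by simp only [map_add, add_smul, hgadd₂])
        (fun r w w' => by simp only [smul_add, hgadd₂, add_smul])
        (fun a r w => by simp only [hχA, mul_smul])
        (U j)
      simp only [hχone, one_smul] at h
      rw [← h]
      exact Finset.sum_congr rfl fun k _ => by
        rw [smul_comm (χ (e₁ k)) (op (ν (e₂ k) (U j))) (uu k), hgright]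
    calc ∑ j, ν (∑ k, i (gm v (χ (e₁ k) • uu k)) * e₂ k) (U j) • V j
        = ∑ j, ∑ k, (gm v (χ (e₁ k) • uu k) * ν (e₂ k) (U j)) • V j :=
          Finset.sum_congr rfl fun j _ => by rw [step1, Finset.sum_smul]
      _ = ∑ j, gm v (U j) • V j := Finset.sum_congr rfl fun j _ => step2 j
      _ = ∑ j, op (fm (U j) (V j)) • v := Finset.sum_congr rfl fun j _ => hassoc₂ v (U j) (V j)
      _ = (∑ j, op (fm (U j) (V j))) • v := (Finset.sum_smul).symm
      _ = v := by rw [← Finset.op_sum, hUV, op_one, one_smul]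
  · -- (e) α intertwines the left R-actions
    intro r v
    exact hd (r * (∑ l, i (gm v (χ (e₁ l) • uu l)) * e₂ l))
      (fun s => by rw [mul_assoc, ha v s, mul_assoc])
end

section
/- Let (R, i, χ) be an I-Frobenius A-ring with a right grouplike character, and define the trace map tr : J → B by tr(v) = χ(g(v ⊗_A χ(e¹)u¹) e²). Then A is projective as a right R-module if and only if there exists v ∈ J such that tr(v) = 1_B. -/
/-!
As `R` is a free right `R`-module and `χ : R → A` is a surjection of right `R`-modules, `A` is
projective iff `χ` splits. A splitting is `a ↦ s * i a` for `s` its value at `1`, so splittings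
correspond to right integrals `s` (`s * i (χ r) = s * r`) with `χ s = 1`.

The trace of `v ∈ J` is `χ s_v` with `s_v = g(v ⊗ χ(e¹)u¹) e²`, and the Casimir property of `e`
makes `s_v` a right integral. Conversely, a right integral `s` gives the right `A`-linear map
`ν̄(s ⊗ -) : I → A`; by strictness of the Morita context it is `g(v ⊗ -)` for some `v`, and then
`s_v = ν̄(s * i(χ e¹) ⊗ u¹) e² = ν̄(s e¹ ⊗ u¹) e² = ν̄(e¹ ⊗ u¹) e² s = s`.
-/

open MulOpposite

universe u

instance Module.Projective.mop_self (R : Type*) [Ring R] : Module.Projective Rᵐᵒᵖ R :=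
  .of_equiv (opLinearEquiv Rᵐᵒᵖ).symm

structure IsRightGrouplikeChar {A R : Type*} [Ring A] [Ring R] (i : A →+* R) (χ : R →+ A) :
    Prop where
  map_mul_ringHom : ∀ (r : R) (a : A), χ (r * i a) = χ r * a
  map_ringHom_map_mul : ∀ r s : R, χ (i (χ r) * s) = χ (r * s)
  map_one : χ 1 = 1

/-- In the Hopf algebra case (`χ` the counit) these are the right integrals. -/
def IsRightIntegral {A R : Type*} [Ring A] [Ring R] (i : A →+* R) (χ : R →+ A) (s : R) : Prop :=
  ∀ r : R, s * i (χ r) = s * r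

namespace IsRightGrouplikeChar

variable {A R : Type*} [Ring A] [Ring R] {i : A →+* R} {χ : R →+ A}

theorem map_ringHom (hχ : IsRightGrouplikeChar i χ) (a : A) : χ (i a) = a := by
  simpa only [one_mul, hχ.map_one] using hχ.map_mul_ringHom 1 a

variable [Module Rᵐᵒᵖ A]

def toRightLinearMap (hχ : IsRightGrouplikeChar i χ)
    (hsmul : ∀ (r : R) (a : A), op r • a = χ (i a * r)) : R →ₗ[Rᵐᵒᵖ] A where
  toFun := χ
  map_add' := χ.map_add
  map_smul' r x := by
    induction r using MulOpposite.rec' with | h r => ?_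
    rw [RingHom.id_apply, hsmul, hχ.map_ringHom_map_mul]
    rfl

def _root_.IsRightIntegral.rightLinearMap {s : R} (hs : IsRightIntegral i χ s)
    (hsmul : ∀ (r : R) (a : A), op r • a = χ (i a * r)) : A →ₗ[Rᵐᵒᵖ] R where
  toFun a := s * i a
  map_add' a b := by rw [map_add, mul_add]
  map_smul' r a := by
    induction r using MulOpposite.rec' with | h r => ?_
    rw [RingHom.id_apply, hsmul, hs, ← mul_assoc]
    rfl

theorem projective_iff_exists_isRightIntegral (hχ : IsRightGrouplikeChar i χ)
    (hsmul : ∀ (r : R) (a : A), op r • a = χ (i a * r)) :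
    Module.Projective Rᵐᵒᵖ A ↔ ∃ s : R, IsRightIntegral i χ s ∧ χ s = 1 := by
  rw [Module.Projective.iff_split_of_projective (hχ.toRightLinearMap hsmul)
    fun a => ⟨i a, hχ.map_ringHom a⟩]
  constructor
  · rintro ⟨σ, hσ⟩
    have hσ_apply (r : R) : σ (χ r) = σ 1 * r := by
      rw [← op_smul_eq_mul, ← map_smul, hsmul, i.map_one, one_mul]
    refine ⟨σ 1, fun r => ?_, LinearMap.congr_fun hσ 1⟩
    rw [← hσ_apply, ← hσ_apply, hχ.map_ringHom]
  · rintro ⟨s, hs, hs_one⟩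
    refine ⟨hs.rightLinearMap hsmul, LinearMap.ext fun a => ?_⟩
    change χ (s * i a) = a
    rw [hχ.map_mul_ringHom, hs_one, one_mul]

end IsRightGrouplikeChar

section Frobenius

variable {A R I : Type u} [Ring A] [Ring R] [AddCommGroup I] [Module A I] [Module Aᵐᵒᵖ I]
  (i : A →+* R) {n : ℕ} (e₁ : Fin n → R) (u : Fin n → I) (e₂ : Fin n → R)

/-- `∑ₖ e₁ₖ ⊗ uₖ ⊗ e₂ₖ ∈ R ⊗_A I ⊗_A R` commutes with `R`, tested against all balanced
triadditive maps. -/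
def IsCasimir : Prop :=
  ∀ (P : Type u) (_ : AddCommGroup P) (T : R → I → R → P),
    (∀ r r' w s, T (r + r') w s = T r w s + T r' w s) →
    (∀ r w w' s, T r (w + w') s = T r w s + T r w' s) →
    (∀ r w s s', T r w (s + s') = T r w s + T r w s') →
    (∀ (a : A) r w s, T (r * i a) w s = T r (a • w) s) →
    (∀ (a : A) r w s, T r (op a • w) s = T r w (i a * s)) →
    ∀ r : R, ∑ k, T (r * e₁ k) (u k) (e₂ k) = ∑ k, T (e₁ k) (u k) (e₂ k * r)

structure IsBalanced (φ : R → I → A) : Prop where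
  add_left : ∀ r r' w, φ (r + r') w = φ r w + φ r' w
  add_right : ∀ r w w', φ r (w + w') = φ r w + φ r w'
  mul_ringHom_left : ∀ (a : A) r w, φ (r * i a) w = φ r (a • w)
  op_smul_right : ∀ (a : A) r w, φ r (op a • w) = φ r w * a

/-- The element `φ(e¹ ⊗ u¹) e²` of `R`. -/
def contraction (φ : R → I → A) : R :=
  ∑ k, i (φ (e₁ k) (u k)) * e₂ k

variable {i e₁ u e₂} {χ : R →+ A}

def IsBalanced.rightLinearMap {φ : R → I → A} (hφ : IsBalanced i φ) (r : R) : I →ₗ[Aᵐᵒᵖ] A where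
  toFun := φ r
  map_add' := hφ.add_right r
  map_smul' a w := hφ.op_smul_right a.unop r w

theorem IsCasimir.contraction_mul_left (he : IsCasimir i e₁ u e₂) {φ : R → I → A}
    (hφ : IsBalanced i φ) (x : R) :
    contraction i e₁ u e₂ (fun r w => φ (x * r) w) = contraction i e₁ u e₂ φ * x := by
  have h := he R inferInstance (fun r w t => i (φ r w) * t)
    (fun r r' w t => by rw [hφ.add_left, map_add, add_mul])
    (fun r w w' t => by rw [hφ.add_right, map_add, add_mul])
    (fun r w t t' => mul_add _ _ _)
    (fun a r w t => by rw [hφ.mul_ringHom_left])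
    (fun a r w t => by rw [hφ.op_smul_right, map_mul, mul_assoc])
    x
  simp only [contraction, h, Finset.sum_mul, mul_assoc]

theorem IsCasimir.contraction_eq_of_isRightIntegral (he : IsCasimir i e₁ u e₂)
    {ν : R → I → A} (hν : IsBalanced i ν)
    (hν_one : contraction i e₁ u e₂ ν = 1) {s : R} (hs : IsRightIntegral i χ s) (ψ : I → A)
    (hψ : ∀ w, ψ w = ν s w) :
    (contraction i e₁ u e₂ fun r w => ψ (χ r • w)) = s := by
  calc (contraction i e₁ u e₂ fun r w => ψ (χ r • w))
      = contraction i e₁ u e₂ fun r w => ν (s * r) w := by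
        congr 1
        funext r w
        rw [hψ, ← hν.mul_ringHom_left, hs]
    _ = s := by rw [he.contraction_mul_left hν, hν_one, one_mul]

variable [SMulCommClass A Aᵐᵒᵖ I]

theorem IsRightGrouplikeChar.isBalanced_comp_smul (hχ : IsRightGrouplikeChar i χ)
    (ψ : I →ₗ[Aᵐᵒᵖ] A) : IsBalanced i fun r w => ψ (χ r • w) where
  add_left r r' w := by rw [map_add, add_smul, map_add]
  add_right r w w' := by rw [smul_add, map_add]
  mul_ringHom_left a r w := by rw [hχ.map_mul_ringHom, mul_smul]
  op_smul_right a r w := by rw [smul_comm, map_smul, op_smul_eq_mul]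

theorem IsCasimir.isRightIntegral_contraction (he : IsCasimir i e₁ u e₂)
    (hχ : IsRightGrouplikeChar i χ) (ψ : I →ₗ[Aᵐᵒᵖ] A) :
    IsRightIntegral i χ (contraction i e₁ u e₂ fun r w => ψ (χ r • w)) := by
  intro r
  simp only [← he.contraction_mul_left (hχ.isBalanced_comp_smul ψ), hχ.map_ringHom_map_mul]

end Frobenius

theorem exists_forall_pairing_eq {A I J : Type*} [Ring A] [AddCommGroup I] [Module A I]
    [Module Aᵐᵒᵖ I] [AddCommGroup J] [Module A J] (fm : I → J → A) (gm : J → I → A)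
    (hgadd : ∀ (v v' : J) (u : I), gm (v + v') u = gm v u + gm v' u)
    (hgleft : ∀ (a : A) (v : J) (u : I), gm (a • v) u = a * gm v u)
    (hassoc : ∀ (u : I) (v : J) (u' : I), fm u v • u' = op (gm v u') • u)
    {n : ℕ} (U : Fin n → I) (V : Fin n → J) (hUV : ∑ j, fm (U j) (V j) = 1)
    (ψ : I →ₗ[Aᵐᵒᵖ] A) : ∃ v : J, ∀ w, gm v w = ψ w := by
  refine ⟨∑ j, ψ (U j) • V j, fun w => ?_⟩
  have hw : ∑ j, op (gm (V j) w) • U j = w := by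
    simp only [← hassoc, ← Finset.sum_smul, hUV, one_smul]
  calc gm (∑ j, ψ (U j) • V j) w
      = ∑ j, gm (ψ (U j) • V j) w := map_sum (AddMonoidHom.mk' (gm · w) (hgadd · · w)) _ _
    _ = ∑ j, ψ (U j) * gm (V j) w := by simp only [hgleft]
    _ = ψ w := by simp only [← op_smul_eq_mul, ← map_smul, ← map_sum, hw]

theorem frobenius_projective_iff_trace_one_general
    {A R : Type u} [Ring A] [Ring R] (i : A →+* R) (χ : R →+ A)
    (hχA : ∀ (r : R) (a : A), χ (r * i a) = χ r * a)
    (hχmul : ∀ r s : R, χ (i (χ r) * s) = χ (r * s))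
    (hχone : χ (1 : R) = 1)
    -- the A-bimodules I and J
    {I J : Type u}
    [AddCommGroup I] [Module A I] [Module Aᵐᵒᵖ I] [SMulCommClass A Aᵐᵒᵖ I]
    [AddCommGroup J] [Module A J]
    -- the Morita context map f : I ⊗_A J → A, as a balanced biadditive map
    (fm : I → J → A)
    -- the Morita context map g : J ⊗_A I → A
    (gm : J → I → A)
    (hgadd₁ : ∀ (v v' : J) (u : I), gm (v + v') u = gm v u + gm v' u)
    (hgadd₂ : ∀ (v : J) (u u' : I), gm v (u + u') = gm v u + gm v u')
    (hgleft : ∀ (a : A) (v : J) (u : I), gm (a • v) u = a * gm v u)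
    (hgright : ∀ (a : A) (v : J) (u : I), gm v (op a • u) = gm v u * a)
    -- associativity of the Morita context: f(u ⊗ v)u' = u g(v ⊗ u'), g(v ⊗ u)v' = v f(u ⊗ v')
    (hassoc₁ : ∀ (u : I) (v : J) (u' : I), fm u v • u' = op (gm v u') • u)
    -- strictness: f and g are surjective (hence bijective); ∑ⱼ uⱼ ⊗ vⱼ represents f⁻¹(1)
    {n₁ : ℕ} (U : Fin n₁ → I) (V : Fin n₁ → J) (hUV : ∑ j, fm (U j) (V j) = 1)
    -- the Frobenius element e = ∑ₖ e¹ₖ ⊗ u¹ₖ ⊗ e²ₖ ∈ R ⊗_A I ⊗_A R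
    {nf : ℕ} (e₁ : Fin nf → R) (uu : Fin nf → I) (e₂ : Fin nf → R)
    -- the Frobenius map ν̄ : R ⊗_A I → A, as a balanced biadditive A-bimodule map
    (ν : R → I → A)
    (hνadd₁ : ∀ (r r' : R) (w : I), ν (r + r') w = ν r w + ν r' w)
    (hνadd₂ : ∀ (r : R) (w w' : I), ν r (w + w') = ν r w + ν r w')
    (hνbal : ∀ (a : A) (r : R) (w : I), ν (r * i a) w = ν r (a • w))
    (hνright : ∀ (a : A) (r : R) (w : I), ν r (op a • w) = ν r w * a)
    -- (3.1.1): the Casimir condition r e¹ ⊗ u¹ ⊗ e² = e¹ ⊗ u¹ ⊗ e² r in R ⊗_A I ⊗_A R,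
    -- tested against arbitrary balanced triadditive maps
    (hCas : ∀ (P : Type u) (_ : AddCommGroup P) (T : R → I → R → P),
      (∀ r r' w s, T (r + r') w s = T r w s + T r' w s) →
      (∀ r w w' s, T r (w + w') s = T r w s + T r w' s) →
      (∀ r w s s', T r w (s + s') = T r w s + T r w s') →
      (∀ (a : A) r w s, T (r * i a) w s = T r (a • w) s) →
      (∀ (a : A) r w s, T r (op a • w) s = T r w (i a * s)) →
      ∀ r : R, ∑ k, T (r * e₁ k) (uu k) (e₂ k) = ∑ k, T (e₁ k) (uu k) (e₂ k * r))
    -- (3.1.2): ν̄(e¹ ⊗ u¹) e² = 1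
    (hfrob₂ : ∑ k, i (ν (e₁ k) (uu k)) * e₂ k = 1)
    -- A as a right R-module via a ↼ r = χ (i a * r)
    [Module Rᵐᵒᵖ A]
    (hsmul : ∀ (r : R) (a : A), op r • a = χ (i a * r)) :
    Module.Projective Rᵐᵒᵖ A ↔
      ∃ v : J, χ (∑ k, i (gm v (χ (e₁ k) • uu k)) * e₂ k) = 1 := by
  have hχ : IsRightGrouplikeChar i χ := ⟨hχA, hχmul, hχone⟩
  have he : IsCasimir i e₁ uu e₂ := hCas
  have hν : IsBalanced i ν := ⟨hνadd₁, hνadd₂, hνbal, hνright⟩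
  rw [hχ.projective_iff_exists_isRightIntegral hsmul]
  constructor
  · rintro ⟨s, hs, hs_one⟩
    obtain ⟨v, hv⟩ :=
      exists_forall_pairing_eq fm gm hgadd₁ hgleft hassoc₁ U V hUV (hν.rightLinearMap s)
    refine ⟨v, ?_⟩
    rwa [← he.contraction_eq_of_isRightIntegral hν hfrob₂ hs (gm v) hv] at hs_one
  · rintro ⟨v, hv⟩
    let g : I →ₗ[Aᵐᵒᵖ] A :=
      { toFun := gm v, map_add' := hgadd₂ v, map_smul' := fun a w => hgright a.unop v w }
    exact ⟨_, he.isRightIntegral_contraction hχ g, hv⟩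

/-- Let `(R, i, χ)` be an `I`-Frobenius `A`-ring with a right grouplike
character (same setup and rendering conventions as in Statement 8), and define the trace
map `tr : J → B` by `tr v = χ (g(v ⊗ χ(e¹)u¹) e²)`. Then `A` is projective as a right
`R`-module (via `a ↼ r = χ (i a * r)`) if and only if there exists `v ∈ J` with
`tr v = 1`. -/
theorem frobenius_projective_iff_trace_one
    {A R : Type u} [Ring A] [Ring R] (i : A →+* R) (χ : R →+ A)
    (hχA : ∀ (r : R) (a : A), χ (r * i a) = χ r * a)
    (hχmul : ∀ r s : R, χ (i (χ r) * s) = χ (r * s))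
    (hχone : χ (1 : R) = 1)
    -- the A-bimodules I and J
    {I J : Type u}
    [AddCommGroup I] [Module A I] [Module Aᵐᵒᵖ I] [SMulCommClass A Aᵐᵒᵖ I]
    [AddCommGroup J] [Module A J] [Module Aᵐᵒᵖ J] [SMulCommClass A Aᵐᵒᵖ J]
    -- the Morita context map f : I ⊗_A J → A, as a balanced biadditive map
    (fm : I → J → A)
    (hfadd₁ : ∀ (u u' : I) (v : J), fm (u + u') v = fm u v + fm u' v)
    (hfadd₂ : ∀ (u : I) (v v' : J), fm u (v + v') = fm u v + fm u v')
    (hfbal : ∀ (a : A) (u : I) (v : J), fm (op a • u) v = fm u (a • v))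
    (hfleft : ∀ (a : A) (u : I) (v : J), fm (a • u) v = a * fm u v)
    (hfright : ∀ (a : A) (u : I) (v : J), fm u (op a • v) = fm u v * a)
    -- the Morita context map g : J ⊗_A I → A
    (gm : J → I → A)
    (hgadd₁ : ∀ (v v' : J) (u : I), gm (v + v') u = gm v u + gm v' u)
    (hgadd₂ : ∀ (v : J) (u u' : I), gm v (u + u') = gm v u + gm v u')
    (hgbal : ∀ (a : A) (v : J) (u : I), gm (op a • v) u = gm v (a • u))
    (hgleft : ∀ (a : A) (v : J) (u : I), gm (a • v) u = a * gm v u)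
    (hgright : ∀ (a : A) (v : J) (u : I), gm v (op a • u) = gm v u * a)
    -- associativity of the Morita context: f(u ⊗ v)u' = u g(v ⊗ u'), g(v ⊗ u)v' = v f(u ⊗ v')
    (hassoc₁ : ∀ (u : I) (v : J) (u' : I), fm u v • u' = op (gm v u') • u)
    (hassoc₂ : ∀ (v : J) (u : I) (v' : J), gm v u • v' = op (fm u v') • v)
    -- strictness: f and g are surjective (hence bijective); ∑ⱼ uⱼ ⊗ vⱼ represents f⁻¹(1)
    {n₁ : ℕ} (U : Fin n₁ → I) (V : Fin n₁ → J) (hUV : ∑ j, fm (U j) (V j) = 1)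
    {n₂ : ℕ} (V' : Fin n₂ → J) (U' : Fin n₂ → I) (hVU : ∑ j, gm (V' j) (U' j) = 1)
    -- the Frobenius element e = ∑ₖ e¹ₖ ⊗ u¹ₖ ⊗ e²ₖ ∈ R ⊗_A I ⊗_A R
    {nf : ℕ} (e₁ : Fin nf → R) (uu : Fin nf → I) (e₂ : Fin nf → R)
    -- the Frobenius map ν̄ : R ⊗_A I → A, as a balanced biadditive A-bimodule map
    (ν : R → I → A)
    (hνadd₁ : ∀ (r r' : R) (w : I), ν (r + r') w = ν r w + ν r' w)
    (hνadd₂ : ∀ (r : R) (w w' : I), ν r (w + w') = ν r w + ν r w')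
    (hνbal : ∀ (a : A) (r : R) (w : I), ν (r * i a) w = ν r (a • w))
    (hνleft : ∀ (a : A) (r : R) (w : I), ν (i a * r) w = a * ν r w)
    (hνright : ∀ (a : A) (r : R) (w : I), ν r (op a • w) = ν r w * a)
    -- (3.1.1): the Casimir condition r e¹ ⊗ u¹ ⊗ e² = e¹ ⊗ u¹ ⊗ e² r in R ⊗_A I ⊗_A R,
    -- tested against arbitrary balanced triadditive maps
    (hCas : ∀ (P : Type u) (_ : AddCommGroup P) (T : R → I → R → P),
      (∀ r r' w s, T (r + r') w s = T r w s + T r' w s) →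
      (∀ r w w' s, T r (w + w') s = T r w s + T r w' s) →
      (∀ r w s s', T r w (s + s') = T r w s + T r w s') →
      (∀ (a : A) r w s, T (r * i a) w s = T r (a • w) s) →
      (∀ (a : A) r w s, T r (op a • w) s = T r w (i a * s)) →
      ∀ r : R, ∑ k, T (r * e₁ k) (uu k) (e₂ k) = ∑ k, T (e₁ k) (uu k) (e₂ k * r))
    -- (3.1.2): ν̄(e¹ ⊗ u¹) e² = 1
    (hfrob₂ : ∑ k, i (ν (e₁ k) (uu k)) * e₂ k = 1)
    -- (3.1.3): e¹ ⊗ u¹ ν̄(e² ⊗ u) = 1 ⊗ u in R ⊗_A I, tested against balanced biadditive maps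
    (hfrob₃ : ∀ (P : Type u) (_ : AddCommGroup P) (T : R → I → P),
      (∀ r r' w, T (r + r') w = T r w + T r' w) →
      (∀ r w w', T r (w + w') = T r w + T r w') →
      (∀ (a : A) r w, T (r * i a) w = T r (a • w)) →
      ∀ w : I, ∑ k, T (e₁ k) (op (ν (e₂ k) w) • uu k) = T 1 w)
    -- A as a right R-module via a ↼ r = χ (i a * r)
    [Module Rᵐᵒᵖ A]
    (hsmul : ∀ (r : R) (a : A), op r • a = χ (i a * r)) :
    Module.Projective Rᵐᵒᵖ A ↔
      ∃ v : J, χ (∑ k, i (gm v (χ (e₁ k) • uu k)) * e₂ k) = 1 :=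
  frobenius_projective_iff_trace_one_general i χ hχA hχmul hχone fm gm hgadd₁ hgadd₂ hgleft hgright
    hassoc₁ U V hUV e₁ uu e₂ ν hνadd₁ hνadd₂ hνbal hνright hCas hfrob₂ hsmul
end

section
/- A right noetherian ring R is right FBN if and only if every finitely generated right R-module is an FBN module. -/
open MulOpposite

/-- A ring `S` is right bounded if every essential right ideal of `S` contains a
nonzero two-sided ideal. Right ideals of `S` are `Sᵐᵒᵖ`-submodules of `S`. -/
def RightBounded (S : Type*) [Ring S] : Prop :=
  ∀ E : Submodule Sᵐᵒᵖ S,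
    (∀ J : Submodule Sᵐᵒᵖ S, J ≠ ⊥ → E ⊓ J ≠ ⊥) →
    ∃ T : TwoSidedIdeal S, T ≠ ⊥ ∧ ∀ x ∈ T, x ∈ E

/-- A two-sided ideal `P` of a ring `S` is prime if `P ≠ S` and
`a S b ⊆ P` implies `a ∈ P` or `b ∈ P`. -/
def TwoSidedIdeal.IsPrimeTSI {S : Type*} [Ring S] (P : TwoSidedIdeal S) : Prop :=
  P ≠ ⊤ ∧ ∀ a b : S, (∀ r : S, a * r * b ∈ P) → a ∈ P ∨ b ∈ P

/-- A ring `S` is right FBN (fully bounded noetherian) if `S` is right noetherian and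
`S/P` is right bounded for every two-sided prime ideal `P` of `S`. -/
def RightFBN (S : Type*) [Ring S] : Prop :=
  IsNoetherianRing Sᵐᵒᵖ ∧
  ∀ P : TwoSidedIdeal S, P.IsPrimeTSI → RightBounded P.ringCon.Quotient

/-- A right `R`-module `M` is `P`-faithful if `Hom_R(P, M') ≠ 0` for every nonzero
submodule `M' ⊆ M`. -/
def IsPFaithful (R : Type u) [Ring R] (P : Type u) [AddCommGroup P] [Module Rᵐᵒᵖ P]
    (M : Type u) [AddCommGroup M] [Module Rᵐᵒᵖ M] : Prop :=
  ∀ M' : Submodule Rᵐᵒᵖ M, M' ≠ ⊥ →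
    ∃ f : P →ₗ[Rᵐᵒᵖ] M, f ≠ 0 ∧ LinearMap.range f ≤ M'

/-- A right `R`-module `P` is a right FBN-module if it is noetherian and for every
finitely generated `P`-faithful right `R`-module `M` there is a finite subset
`F ⊆ Hom_R(P, M)` with `r_P(F) = r_P(Hom_R(P, M))`, where `r_P(X) = ⋂_{f ∈ X} ker f`. -/
def RightFBNModule (R : Type u) [Ring R] (P : Type u) [AddCommGroup P]
    [Module Rᵐᵒᵖ P] : Prop :=
  IsNoetherian Rᵐᵒᵖ P ∧
  ∀ (M : Type u) (_ : AddCommGroup M) (_ : Module Rᵐᵒᵖ M),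
    Module.Finite Rᵐᵒᵖ M → IsPFaithful R P M →
    ∃ F : Finset (P →ₗ[Rᵐᵒᵖ] M),
      (⨅ f ∈ F, LinearMap.ker f) = ⨅ f : P →ₗ[Rᵐᵒᵖ] M, LinearMap.ker f

/-! Forward direction. Let `K = ⋂ ker f` over all `f : V → M`. By noetherian induction on `V`,
it suffices to find, below any submodule `V₀ ⊄ K`, some `g` and `C ≤ V₀` with `C ⊄ K` and
`C ∩ ker g ≤ K`. If there were none, pick `C ≤ V₀`, `C ⊄ K`, whose annihilator `P` modulo `K` is
maximal; then `P` is prime, and the failure makes the annihilator of every `g c` (`c ∈ C`)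
essential modulo `P`. The submodule of `M` spanned by these `g c` is finitely generated, so
boundedness of `R/P` gives a nonzero ideal of `R/P` killing it, i.e. an element outside `P`
mapping `C` into `K`: a contradiction.

Backward direction. For an essential right ideal `E` of `R/P` with preimage `Ẽ`, apply the
FBN-module property of `R_R` to `R/Ẽ`. Maps `R → R/Ẽ` are left multiplications by some `y`,
with kernel `(Ẽ : y)`; a finite family of these has essential image in `R/P`, and any nonzero `s`
in it satisfies `(R/P) s ⊆ E`, so it generates a nonzero two-sided ideal inside `E`. -/

namespace Submodule

section Semiring

variable {R M N : Type*} [Semiring R] [AddCommMonoid M] [Module R M] [AddCommMonoid N]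
  [Module R N]

def IsEssential (E : Submodule R M) : Prop :=
  ∀ J : Submodule R M, J ≠ ⊥ → E ⊓ J ≠ ⊥

namespace IsEssential

theorem top : (⊤ : Submodule R M).IsEssential := fun J hJ => by simpa using hJ

theorem inf {E₁ E₂ : Submodule R M} (h₁ : E₁.IsEssential) (h₂ : E₂.IsEssential) :
    (E₁ ⊓ E₂).IsEssential := fun J hJ => by
  rw [inf_assoc]
  exact h₁ _ (h₂ _ hJ)

theorem biInf {ι : Type*} (s : Finset ι) {E : ι → Submodule R M}
    (h : ∀ i ∈ s, (E i).IsEssential) : (⨅ i ∈ s, E i).IsEssential := by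
  classical
  induction s using Finset.induction_on with
  | empty => simpa using top
  | insert a s _ ih =>
    rw [Finset.iInf_insert]
    exact (h a (s.mem_insert_self a)).inf (ih fun i hi => h i (Finset.mem_insert_of_mem hi))

theorem ne_bot [Nontrivial M] {E : Submodule R M} (h : E.IsEssential) : E ≠ ⊥ := by
  simpa using h ⊤ bot_ne_top.symm

theorem comap {E : Submodule R N} (h : E.IsEssential) (f : M →ₗ[R] N) :
    (E.comap f).IsEssential := by
  intro J hJ
  by_cases hfJ : J.map f = ⊥
  · have hJE : J ≤ E.comap f := fun x hx => by
      simp [(Submodule.eq_bot_iff _).1 hfJ (f x) (mem_map_of_mem hx)]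
    rwa [inf_eq_right.2 hJE]
  obtain ⟨_, ⟨hyE, x, hxJ, rfl⟩, hy⟩ := (Submodule.ne_bot_iff _).1 (h _ hfJ)
  exact (Submodule.ne_bot_iff _).2 ⟨x, ⟨hyE, hxJ⟩, fun hx => hy (by simp [hx])⟩

end IsEssential

theorem mem_annihilator_span_iff {s : Set M} {r : R} :
    r ∈ (span R s).annihilator ↔ ∀ x ∈ s, ∀ t : R, (r * t) • x = 0 := by
  refine ⟨fun h x hx t => ?_, fun h => mem_annihilator.2 fun y hy => ?_⟩
  · rw [mul_smul]
    exact mem_annihilator.1 h _ (smul_mem _ t (subset_span hx))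
  suffices ∀ t : R, (r * t) • y = 0 by simpa using this 1
  induction hy using span_induction with
  | mem x hx => exact h x hx
  | zero => simp
  | add x y _ _ hx hy => simp [smul_add, hx, hy]
  | smul t' x _ hx => intro t; rw [← mul_smul, mul_assoc, hx]

end Semiring

variable {S : Type*} [Ring S]

def twoSidedCore (E : Submodule Sᵐᵒᵖ S) : TwoSidedIdeal S :=
  TwoSidedIdeal.mk' {t | ∀ s, s * t ∈ E} (by simp)
    (fun ha hb s => by simpa [mul_add] using E.add_mem (ha s) (hb s))
    (fun ha s => by simpa using E.neg_mem (ha s))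
    (fun {a _} hb s => by simpa [mul_assoc] using hb (s * a))
    (fun {_ b} ha s => by simpa [mul_assoc] using E.smul_mem (op b) (ha s))

theorem mem_twoSidedCore {E : Submodule Sᵐᵒᵖ S} {t : S} :
    t ∈ E.twoSidedCore ↔ ∀ s, s * t ∈ E :=
  TwoSidedIdeal.mem_mk' ..

theorem mem_of_mem_twoSidedCore {E : Submodule Sᵐᵒᵖ S} {t : S} (ht : t ∈ E.twoSidedCore) :
    t ∈ E := by
  simpa using mem_twoSidedCore.1 ht 1

end Submodule

theorem exists_finset_iInf_eq_iInf {α ι : Type*} [CompleteLattice α] [IsModularLattice α]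
    [WellFoundedGT α] (N : ι → α)
    (h : ∀ s : Finset ι, ¬ ⨅ i ∈ s, N i ≤ ⨅ i, N i →
      ∃ j c, c ≤ ⨅ i ∈ s, N i ∧ ¬ c ≤ ⨅ i, N i ∧ c ⊓ N j ≤ ⨅ i, N i) :
    ∃ s : Finset ι, ⨅ i ∈ s, N i = ⨅ i, N i := by
  classical
  set K := ⨅ i, N i
  obtain ⟨g, ⟨s, hs⟩, hmax⟩ := wellFounded_gt.has_min {g : α | ∃ s : Finset ι, g ⊓ ⨅ i ∈ s, N i ≤ K}
    ⟨⊥, ∅, by simp⟩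
  refine ⟨s, le_antisymm (not_not.1 fun hsK => ?_) (le_iInf₂ fun i _ => iInf_le N i)⟩
  obtain ⟨j, c, hcs, hcK, hcj⟩ := h s hsK
  have hKj : K ≤ N j := iInf_le N j
  have hgc : (c ⊔ g) ⊓ ⨅ i ∈ insert j s, N i ≤ K := by
    rw [Finset.iInf_insert, ← inf_assoc, inf_right_comm]
    calc (c ⊔ g) ⊓ (⨅ i ∈ s, N i) ⊓ N j ≤ (c ⊔ g ⊓ ⨅ i ∈ s, N i) ⊓ N j :=
          inf_le_inf_right _ (IsModularLattice.sup_inf_le_assoc_of_le g hcs)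
      _ ≤ g ⊓ (⨅ i ∈ s, N i) ⊔ c ⊓ N j := by
          rw [sup_comm]; exact IsModularLattice.sup_inf_le_assoc_of_le c (hs.trans hKj)
      _ ≤ K := sup_le hs hcj
  have hcg : c ≤ g := by
    by_contra hcg
    exact hmax _ ⟨_, hgc⟩ (lt_of_le_of_ne le_sup_right fun heq => hcg (heq ▸ le_sup_left))
  exact hcK ((le_inf hcg hcs).trans hs)

namespace RingCon

variable {R : Type*} [Ring R] (c : RingCon R)

instance ringHomSurjective_op_mk' : RingHomSurjective (RingHom.op c.mk') where
  is_surjective σ := by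
    obtain ⟨r, hr⟩ := c.mk'_surjective σ.unop
    exact ⟨MulOpposite.op r, congrArg MulOpposite.op hr⟩

def mkOpₛₗ : Rᵐᵒᵖ →ₛₗ[RingHom.op c.mk'] c.Quotient where
  toFun ρ := c.mk' ρ.unop
  map_add' _ _ := map_add _ _ _
  map_smul' _ _ := map_mul _ _ _

@[simp]
theorem mkOpₛₗ_apply (ρ : Rᵐᵒᵖ) : c.mkOpₛₗ ρ = c.mk' ρ.unop := rfl

theorem mkOpₛₗ_surjective : Function.Surjective c.mkOpₛₗ := fun σ => by
  obtain ⟨r, hr⟩ := c.mk'_surjective σ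
  exact ⟨MulOpposite.op r, hr⟩

theorem mkOpₛₗ_mul (ρ τ : Rᵐᵒᵖ) : c.mkOpₛₗ (ρ * τ) = c.mkOpₛₗ τ * c.mkOpₛₗ ρ :=
  map_mul c.mk' τ.unop ρ.unop

variable {c} in
open LinearMap in
theorem mem_ker_toSpanSingleton_mkQ_comap (E : Submodule c.Quotientᵐᵒᵖ c.Quotient)
    (z ρ : Rᵐᵒᵖ) :
    ρ ∈ LinearMap.ker (toSpanSingleton Rᵐᵒᵖ _ ((E.comap c.mkOpₛₗ).mkQ z)) ↔
      c.mkOpₛₗ z * c.mkOpₛₗ ρ ∈ E := by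
  rw [mem_ker, toSpanSingleton_apply, ← map_smul, Submodule.mkQ_apply,
    Submodule.Quotient.mk_eq_zero, Submodule.mem_comap, smul_eq_mul, RingCon.mkOpₛₗ_mul]

end RingCon

namespace TwoSidedIdeal

variable {R : Type*} [Ring R] (P : TwoSidedIdeal R)

theorem ker_mkOpₛₗ : LinearMap.ker P.ringCon.mkOpₛₗ = P.asIdealOpposite := by
  ext ρ
  rw [LinearMap.mem_ker, mem_asIdealOpposite, RingCon.mkOpₛₗ_apply, ← mem_ker,
    ker_ringCon_mk']

theorem nontrivial_quotient (hP : P ≠ ⊤) : Nontrivial P.ringCon.Quotient := by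
  refine ⟨0, 1, fun h => hP (P.one_mem_iff.1 ?_)⟩
  rw [← ker_ringCon_mk' P, mem_ker, map_one]
  exact h.symm

theorem exists_mem_ne_zero {T : TwoSidedIdeal R} (hT : T ≠ ⊥) : ∃ x ∈ T, x ≠ 0 := by
  by_contra! h
  exact hT (le_bot_iff.1 fun x hx => (mem_bot R).2 (h x hx))

end TwoSidedIdeal

open Submodule LinearMap

section Forward

variable {R : Type*} [Ring R] {V M : Type*} [AddCommGroup V] [Module Rᵐᵒᵖ V]
  [AddCommGroup M] [Module Rᵐᵒᵖ M]

namespace Submodule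

def colonTwoSided (K C : Submodule Rᵐᵒᵖ V) : TwoSidedIdeal R :=
  (K.colon (C : Set V)).toTwoSided.unop

theorem asIdealOpposite_colonTwoSided (K C : Submodule Rᵐᵒᵖ V) :
    (K.colonTwoSided C).asIdealOpposite = K.colon C := by
  ext ρ
  simp [colonTwoSided, TwoSidedIdeal.mem_asIdealOpposite, TwoSidedIdeal.mem_unop_iff]

theorem mem_colonTwoSided {K C : Submodule Rᵐᵒᵖ V} {r : R} :
    r ∈ K.colonTwoSided C ↔ ∀ c ∈ C, op r • c ∈ K := by
  simp [colonTwoSided, TwoSidedIdeal.mem_unop_iff, mem_colon]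

theorem exists_le_colon_eq_of_not_le [IsNoetherianRing Rᵐᵒᵖ] {K V₀ : Submodule Rᵐᵒᵖ V}
    (h : ¬ V₀ ≤ K) :
    ∃ C ≤ V₀, ¬ C ≤ K ∧ ∀ D ≤ C, ¬ D ≤ K → K.colon (D : Set V) = K.colon C := by
  obtain ⟨_, ⟨C, hCV₀, hCK, rfl⟩, hmax⟩ := set_has_maximal_iff_noetherian.2 ‹_›
    {I | ∃ C ≤ V₀, ¬ C ≤ K ∧ K.colon (C : Set V) = I} ⟨_, V₀, le_rfl, h, rfl⟩
  refine ⟨C, hCV₀, hCK, fun D hDC hDK => ?_⟩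
  by_contra hne
  exact hmax _ ⟨D, hDC.trans hCV₀, hDK, rfl⟩ ((colon_mono le_rfl hDC).lt_of_ne' hne)

theorem isPrimeTSI_colonTwoSided {K C : Submodule Rᵐᵒᵖ V} (hCK : ¬ C ≤ K)
    (hmax : ∀ D ≤ C, ¬ D ≤ K → K.colon (D : Set V) = K.colon C) :
    (K.colonTwoSided C).IsPrimeTSI := by
  refine ⟨fun htop => hCK fun c hc => ?_, fun a b hab => or_iff_not_imp_left.2 fun ha => ?_⟩
  · simpa using mem_colonTwoSided.1 ((K.colonTwoSided C).one_mem_iff.2 htop) c hc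
  obtain ⟨c, hc, hac⟩ : ∃ c ∈ C, op a • c ∉ K := by simpa [mem_colonTwoSided] using ha
  have hD : span Rᵐᵒᵖ {op a • c} ≤ C := (span_singleton_le_iff_mem _ _).2 (C.smul_mem _ hc)
  have hcolon := hmax _ hD fun hle => hac (hle (mem_span_singleton_self _))
  suffices op b ∈ K.colon (span Rᵐᵒᵖ {op a • c} : Set V) by
    rwa [hcolon, ← asIdealOpposite_colonTwoSided, TwoSidedIdeal.mem_asIdealOpposite] at this
  refine mem_colon.2 fun v hv => ?_
  obtain ⟨τ, rfl⟩ := mem_span_singleton.1 hv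
  simpa [op_mul, mul_smul] using mem_colonTwoSided.1 (hab τ.unop) c hc

end Submodule

theorem isEssential_map_torsionOf {P : TwoSidedIdeal R} {K : Submodule Rᵐᵒᵖ V} {c : V}
    (hPc : P.asIdealOpposite ≤ K.colon {c}) (g : V →ₗ[Rᵐᵒᵖ] M) (hKg : K ≤ ker g)
    (hg : ∀ D ≤ span Rᵐᵒᵖ {c}, ¬ D ≤ K → ¬ D ⊓ ker g ≤ K) :
    (Submodule.map P.ringCon.mkOpₛₗ (Ideal.torsionOf Rᵐᵒᵖ M (g c))).IsEssential := by
  intro J hJ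
  obtain ⟨σ, hσJ, hσ0⟩ := (Submodule.ne_bot_iff J).1 hJ
  obtain ⟨ρ, rfl⟩ := P.ringCon.mkOpₛₗ_surjective σ
  have hD : span Rᵐᵒᵖ {ρ • c} ≤ span Rᵐᵒᵖ {c} :=
    (span_singleton_le_iff_mem _ _).2 (smul_mem _ _ (mem_span_singleton_self c))
  by_cases hDK : span Rᵐᵒᵖ {ρ • c} ≤ K
  · have hρ : ρ ∈ Ideal.torsionOf Rᵐᵒᵖ M (g c) := by
      simpa using hKg (hDK (mem_span_singleton_self _))
    exact (Submodule.ne_bot_iff _).2 ⟨_, ⟨mem_map_of_mem hρ, hσJ⟩, hσ0⟩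
  obtain ⟨v, ⟨hvD, hvg⟩, hvK⟩ := SetLike.not_le_iff_exists.1 (hg _ hD hDK)
  obtain ⟨τ, rfl⟩ := mem_span_singleton.1 hvD
  refine (Submodule.ne_bot_iff _).2 ⟨_, ⟨mem_map_of_mem (r := τ * ρ) ?_, ?_⟩, fun h0 => hvK ?_⟩
  · simpa [mul_smul] using hvg
  · rw [RingCon.mkOpₛₗ_mul]
    exact J.smul_mem (op (P.ringCon.mkOpₛₗ τ)) hσJ
  · rw [← mem_ker, TwoSidedIdeal.ker_mkOpₛₗ] at h0
    simpa [mul_smul] using hPc h0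

theorem not_annihilator_span_le_asIdealOpposite [IsNoetherian Rᵐᵒᵖ M] {P : TwoSidedIdeal R}
    (hP : RightBounded P.ringCon.Quotient) {X : Set M}
    (hPX : ∀ x ∈ X, P.asIdealOpposite ≤ Ideal.torsionOf Rᵐᵒᵖ M x)
    (hX : ∀ x ∈ X, (Submodule.map P.ringCon.mkOpₛₗ (Ideal.torsionOf Rᵐᵒᵖ M x)).IsEssential) :
    ¬ (span Rᵐᵒᵖ X).annihilator ≤ P.asIdealOpposite := by
  classical
  obtain ⟨s, hsX, hspan⟩ :=
    (fg_span_iff_fg_span_finset_subset X).1 (IsNoetherian.noetherian (span Rᵐᵒᵖ X))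
  obtain ⟨T, hT, hTs⟩ := hP _ (IsEssential.biInf s fun x hx => hX x (hsX hx))
  obtain ⟨σ, hσT, hσ0⟩ := TwoSidedIdeal.exists_mem_ne_zero hT
  obtain ⟨ρ, rfl⟩ := P.ringCon.mkOpₛₗ_surjective σ
  refine fun hle => hσ0 (mem_ker.1 (P.ker_mkOpₛₗ ▸ hle ?_))
  rw [hspan, mem_annihilator_span_iff]
  intro x hx τ
  rw [← Ideal.mem_torsionOf_iff, ← comap_map_eq_self (P.ker_mkOpₛₗ.trans_le (hPX x (hsX hx))),
    mem_comap, RingCon.mkOpₛₗ_mul]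
  have hτσ := hTs _ (T.mul_mem_left (P.ringCon.mkOpₛₗ τ) _ hσT)
  exact (mem_iInf _).1 ((mem_iInf _).1 hτσ x) hx

theorem exists_inf_ker_le_iInf_ker [IsNoetherianRing Rᵐᵒᵖ] [IsNoetherian Rᵐᵒᵖ M]
    (hb : ∀ P : TwoSidedIdeal R, P.IsPrimeTSI → RightBounded P.ringCon.Quotient)
    {V₀ : Submodule Rᵐᵒᵖ V} (hV₀ : ¬ V₀ ≤ ⨅ f : V →ₗ[Rᵐᵒᵖ] M, ker f) :
    ∃ (g : V →ₗ[Rᵐᵒᵖ] M) (C : Submodule Rᵐᵒᵖ V), C ≤ V₀ ∧ ¬ C ≤ ⨅ f : V →ₗ[Rᵐᵒᵖ] M, ker f ∧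
      C ⊓ ker g ≤ ⨅ f : V →ₗ[Rᵐᵒᵖ] M, ker f := by
  set K := ⨅ f : V →ₗ[Rᵐᵒᵖ] M, ker f
  obtain ⟨C, hCV₀, hCK, hmax⟩ := exists_le_colon_eq_of_not_le hV₀
  by_contra! hcon
  have hPC := asIdealOpposite_colonTwoSided K C
  refine not_annihilator_span_le_asIdealOpposite (hb _ (isPrimeTSI_colonTwoSided hCK hmax))
    (X := {x | ∃ g : V →ₗ[Rᵐᵒᵖ] M, ∃ c ∈ C, g c = x}) ?_ ?_ ?_
  · rintro _ ⟨g, c, hc, rfl⟩ ρ hρ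
    have : ρ • c ∈ K := mem_colon.1 (hPC ▸ hρ) c hc
    simpa using (mem_iInf _).1 this g
  · rintro _ ⟨g, c, hc, rfl⟩
    refine isEssential_map_torsionOf (hPC ▸ colon_mono le_rfl (by simpa using hc)) g (iInf_le _ g)
      fun D hD => hcon g D (hD.trans ((span_singleton_le_iff_mem _ _).2 hc) |>.trans hCV₀)
  · rw [hPC]
    refine fun ρ hρ => mem_colon.2 fun c hc => (mem_iInf _).2 fun g => ?_
    simpa using mem_annihilator.1 hρ _ (subset_span ⟨g, c, hc, rfl⟩)

theorem exists_finset_iInf_ker_eq [IsNoetherianRing Rᵐᵒᵖ] [IsNoetherian Rᵐᵒᵖ V]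
    [IsNoetherian Rᵐᵒᵖ M]
    (hb : ∀ P : TwoSidedIdeal R, P.IsPrimeTSI → RightBounded P.ringCon.Quotient) :
    ∃ F : Finset (V →ₗ[Rᵐᵒᵖ] M),
      ⨅ f ∈ F, LinearMap.ker f = ⨅ f : V →ₗ[Rᵐᵒᵖ] M, LinearMap.ker f :=
  exists_finset_iInf_eq_iInf _ fun _ hs => exists_inf_ker_le_iInf_ker hb hs

end Forward

section Backward

variable {R : Type u} [Ring R]

theorem isPFaithful_self (M : Type u) [AddCommGroup M] [Module Rᵐᵒᵖ M] :
    IsPFaithful R Rᵐᵒᵖ M := by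
  intro M' hM'
  obtain ⟨m, hm, hm0⟩ := (Submodule.ne_bot_iff M').1 hM'
  refine ⟨LinearMap.toSpanSingleton Rᵐᵒᵖ M m, fun h => hm0 ?_, ?_⟩
  · simpa using LinearMap.congr_fun h 1
  · rw [← LinearMap.span_singleton_eq_range]
    exact (span_singleton_le_iff_mem _ _).2 hm

theorem rightBounded_quotient_of_rightFBNModule (hR : RightFBNModule R Rᵐᵒᵖ)
    {P : TwoSidedIdeal R} (hP : P ≠ ⊤) : RightBounded P.ringCon.Quotient := by
  have := P.nontrivial_quotient hP
  intro E hE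
  set φ := P.ringCon.mkOpₛₗ
  obtain ⟨F, hF⟩ := hR.2 (Rᵐᵒᵖ ⧸ E.comap φ) _ _ inferInstance (isPFaithful_self _)
  choose y hy using fun f : Rᵐᵒᵖ →ₗ[Rᵐᵒᵖ] Rᵐᵒᵖ ⧸ E.comap φ => (E.comap φ).mkQ_surjective (f 1)
  have hf (f : Rᵐᵒᵖ →ₗ[Rᵐᵒᵖ] Rᵐᵒᵖ ⧸ E.comap φ) :
      f = toSpanSingleton Rᵐᵒᵖ _ ((E.comap φ).mkQ (y f)) :=
    ext_ring (by simp [hy])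
  have hess := IsEssential.biInf F fun f _ =>
    IsEssential.comap hE (mulLeft P.ringCon.Quotientᵐᵒᵖ (φ (y f)))
  obtain ⟨σ, hσ, hσ0⟩ := (Submodule.ne_bot_iff _).1 hess.ne_bot
  obtain ⟨ρ, rfl⟩ := P.ringCon.mkOpₛₗ_surjective σ
  have hρ : ρ ∈ ⨅ f : Rᵐᵒᵖ →ₗ[Rᵐᵒᵖ] Rᵐᵒᵖ ⧸ E.comap φ, ker f := by
    rw [← hF]
    simp only [Submodule.mem_iInf] at hσ ⊢
    intro f hfF
    rw [hf f, RingCon.mem_ker_toSpanSingleton_mkQ_comap]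
    exact hσ f hfF
  refine ⟨E.twoSidedCore, fun hbot => hσ0 ?_, fun x hx => Submodule.mem_of_mem_twoSidedCore hx⟩
  have hcore : φ ρ ∈ E.twoSidedCore := Submodule.mem_twoSidedCore.2 fun s => by
    obtain ⟨z, rfl⟩ := P.ringCon.mkOpₛₗ_surjective s
    exact (RingCon.mem_ker_toSpanSingleton_mkQ_comap E z ρ).1 ((Submodule.mem_iInf _).1 hρ _)
  rw [hbot] at hcore
  exact (TwoSidedIdeal.mem_bot _).1 hcore

end Backward

/-- A right noetherian ring `R` is right FBN if and only if every
finitely generated right `R`-module is an FBN module. -/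
theorem rightFBN_iff_forall_fg_FBNModule
    (R : Type u) [Ring R] (hnoeth : IsNoetherianRing Rᵐᵒᵖ) :
    RightFBN R ↔
      ∀ (M : Type u) (_ : AddCommGroup M) (_ : Module Rᵐᵒᵖ M),
        Module.Finite Rᵐᵒᵖ M → RightFBNModule R M := by
  constructor
  · rintro ⟨-, hb⟩ V _ _ _
    have hV := isNoetherian_of_isNoetherianRing_of_finite Rᵐᵒᵖ V
    refine ⟨hV, fun M _ _ _ _ => ?_⟩
    have := isNoetherian_of_isNoetherianRing_of_finite Rᵐᵒᵖ M
    exact exists_finset_iInf_ker_eq hb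
  · exact fun H => ⟨hnoeth, fun P hP =>
      rightBounded_quotient_of_rightFBNModule (H Rᵐᵒᵖ _ _ inferInstance) hP.1⟩
end
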